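/- Assume α₁, α₂, α₃ > 0 and let σ ∈ ℝ. Then for every x = (x₁,x₂,x₃) ∈ ℝ³, 2⟨x, b(x)⟩ + σ²(x₁²+x₂²+x₃²) ≤ (2·max{α₁, α₂, α₃} + σ²)·(x₁²+x₂²+x₃²). (This is the Lyapunov estimate ℒV(x) ≤ (2 max αᵢ + σ²)V(x) for V(x) = ‖x‖², where ℒ is the generator of the system perturbed by linear multiplicative noise of intensity σ, used to prove global existence of solutions.) -/

import Mathlib

open scoped RealInnerProductSpace

/-- The cubic Kolmogorov vector field on `ℝ³` (modelled as `EuclideanSpace ℝ (Fin 3)`):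
`b(x)₁ = x₁(α₁ − α₁x₁² − (α₁+α₂+d₁)x₂² + d₂x₃²)`,
`b(x)₂ = x₂(α₂ + d₁x₁² − α₂x₂² − (α₂+α₃+d₃)x₃²)`,
`b(x)₃ = x₃(α₃ − (α₃+α₁+d₂)x₁² + d₃x₂² − α₃x₃²)`. -/
noncomputable def bVF (α₁ α₂ α₃ d₁ d₂ d₃ : ℝ) (x : EuclideanSpace ℝ (Fin 3)) :
    EuclideanSpace ℝ (Fin 3) :=
  (WithLp.equiv 2 (Fin 3 → ℝ)).symm
    ![x 0 * (α₁ - α₁ * (x 0)^2 - (α₁ + α₂ + d₁) * (x 1)^2 + d₂ * (x 2)^2),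
      x 1 * (α₂ + d₁ * (x 0)^2 - α₂ * (x 1)^2 - (α₂ + α₃ + d₃) * (x 2)^2),
      x 2 * (α₃ - (α₃ + α₁ + d₂) * (x 0)^2 + d₃ * (x 1)^2 - α₃ * (x 2)^2)]

/-! The interaction coefficients `dᵢ` cancel in `⟨x, b(x)⟩`, which factors as
`(1 − ‖x‖²) · Σ αᵢ xᵢ²`. For `αᵢ > 0` the weighted sum is nonnegative, so dropping the factor
`−‖x‖²` only increases it, and `Σ αᵢ xᵢ² ≤ (max αᵢ) ‖x‖²`. -/

theorem inner_bVF (α₁ α₂ α₃ d₁ d₂ d₃ : ℝ) (x : EuclideanSpace ℝ (Fin 3)) :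
    ⟪x, bVF α₁ α₂ α₃ d₁ d₂ d₃ x⟫ =
      (1 - ((x 0)^2 + (x 1)^2 + (x 2)^2)) * (α₁ * (x 0)^2 + α₂ * (x 1)^2 + α₃ * (x 2)^2) := by
  simp only [bVF, PiLp.inner_apply, RCLike.inner_apply, Fin.sum_univ_three,
    WithLp.equiv_symm_apply, Matrix.cons_val_zero, Matrix.cons_val_one,
    Matrix.cons_val_two, Matrix.head_cons, Matrix.tail_cons, conj_trivial]
  ring

theorem weighted_sum_sq_le_max_mul (α₁ α₂ α₃ a b c : ℝ) :
    α₁ * a^2 + α₂ * b^2 + α₃ * c^2 ≤ max α₁ (max α₂ α₃) * (a^2 + b^2 + c^2) := by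
  have h₁ : α₁ ≤ max α₁ (max α₂ α₃) := le_max_left _ _
  have h₂ : α₂ ≤ max α₁ (max α₂ α₃) := (le_max_left _ _).trans (le_max_right _ _)
  have h₃ : α₃ ≤ max α₁ (max α₂ α₃) := (le_max_right _ _).trans (le_max_right _ _)
  rw [mul_add, mul_add]
  gcongr

/-- The Lyapunov estimate `ℒV(x) ≤ (2 max αᵢ + σ²) V(x)` for `V(x) = ‖x‖²`:
`2⟨x, b(x)⟩ + σ²‖x‖² ≤ (2 max{α₁,α₂,α₃} + σ²)‖x‖²`. -/
theorem generator_estimate (α₁ α₂ α₃ d₁ d₂ d₃ σ : ℝ)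
    (hα₁ : 0 < α₁) (hα₂ : 0 < α₂) (hα₃ : 0 < α₃)
    (x : EuclideanSpace ℝ (Fin 3)) :
    2 * ⟪x, bVF α₁ α₂ α₃ d₁ d₂ d₃ x⟫ + σ ^ 2 * ((x 0)^2 + (x 1)^2 + (x 2)^2)
      ≤ (2 * max α₁ (max α₂ α₃) + σ ^ 2) * ((x 0)^2 + (x 1)^2 + (x 2)^2) := by
  set r := (x 0)^2 + (x 1)^2 + (x 2)^2
  set w := α₁ * (x 0)^2 + α₂ * (x 1)^2 + α₃ * (x 2)^2
  have hr_nonneg : 0 ≤ r := by positivity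
  have hw_nonneg : 0 ≤ w := by positivity
  calc 2 * ⟪x, bVF α₁ α₂ α₃ d₁ d₂ d₃ x⟫ + σ ^ 2 * r
      = 2 * ((1 - r) * w) + σ ^ 2 * r := by rw [inner_bVF]
    _ ≤ 2 * w + σ ^ 2 * r := by linarith [mul_nonneg hr_nonneg hw_nonneg]
    _ ≤ 2 * (max α₁ (max α₂ α₃) * r) + σ ^ 2 * r := by
        gcongr; exact weighted_sum_sq_le_max_mul _ _ _ _ _ _
    _ = (2 * max α₁ (max α₂ α₃) + σ ^ 2) * r := by ring
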